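/- Let a, b, k be nonnegative integers with a + b ≤ k − 1. Then 𝒟^{(2)}_{(a, k−a−b, b)}(z, q) − 𝒟^{(2)}_{(a+1, k−a−b−1, b)}(z, q) = Σ_{i=0}^{a} Σ_{j=0}^{k−a} (zq)^{k+i−a+min(0, j−b)} q^{i+j} · 𝒟^{(2)}_{(i, k−i−j, j)}(zq², q). -/

import Mathlib

noncomputable section

/-- The weight (sum of parts) of a coloured partition given by its multiplicity
function `f`, where `f (i, c)` is the number of parts equal to `i` of colour `c`. -/
def wt (f : ℕ × ℕ →₀ ℕ) : ℕ := f.sum fun p v => p.1 * v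

/-- The length (number of parts) of a coloured partition. -/
def len (f : ℕ × ℕ →₀ ℕ) : ℕ := f.sum fun _ v => v

/-- `f` is a type-`C` coloured partition for rank `n`: parts are at least `1`, colours
lie in `{1, …, 2n+1}`, and parts of colour `c` have the same parity as `c`
(i.e. `fᵢ⁽ᶜ⁾ = 0` unless `i + c` is even). -/
def IsCPC (n : ℕ) (f : ℕ × ℕ →₀ ℕ) : Prop :=
  ∀ p ∈ f.support, 1 ≤ p.1 ∧ 1 ≤ p.2 ∧ p.2 ≤ 2 * n + 1 ∧ (p.1 + p.2) % 2 = 0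

/-- The extended frequencies of a type-`C` coloured partition, with boundary conditions
`f₋₁⁽²ᶜ⁺¹⁾ = k c` (for `0 ≤ c ≤ n`) and `f₀⁽²ᶜ⁾ = 0`. -/
def fextC (k : ℕ → ℕ) (f : ℕ × ℕ →₀ ℕ) (i : ℤ) (c : ℕ) : ℕ :=
  if i = -1 then (if c % 2 = 1 then k ((c - 1) / 2) else 0) else f (i.toNat, c)

/-- Membership in the set `𝒞_{k₀,…,kₙ}`: `f` is a type-`C` coloured partition and every
path — a sequence of integers `p 0, …, p (2n)` with `p j ≥ -1`, `p j + j + 1` even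
(entry `j` is read in colour `j + 1`) and `|p (j+1) - p j| = 1` — has total weight at
most `k₀ + ⋯ + kₙ`. -/
def MemC (n : ℕ) (k : ℕ → ℕ) (f : ℕ × ℕ →₀ ℕ) : Prop :=
  IsCPC n f ∧
  ∀ p : ℕ → ℤ,
    (∀ j < 2 * n + 1, -1 ≤ p j ∧ (p j + (j : ℤ) + 1) % 2 = 0) →
    (∀ j, j + 1 < 2 * n + 1 → |p (j + 1) - p j| = 1) →
    ∑ j ∈ Finset.range (2 * n + 1), fextC k f (p j) (j + 1) ≤ ∑ c ∈ Finset.range (n + 1), k c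

/-- `f` is a type-`D` coloured partition for rank `n`: parts are at least `1`, colours
lie in `{1, …, 2n−1}`, and `fᵢ⁽ᶜ⁾ = 0` unless `i + c` is odd. -/
def IsCPD (n : ℕ) (f : ℕ × ℕ →₀ ℕ) : Prop :=
  ∀ p ∈ f.support, 1 ≤ p.1 ∧ 1 ≤ p.2 ∧ p.2 ≤ 2 * n - 1 ∧ (p.1 + p.2) % 2 = 1

/-- The extended frequencies of a type-`D` coloured partition, with boundary conditions
`f₋₁⁽²ᶜ⁾ = k c` (for `1 ≤ c ≤ n−1`), `f₀⁽¹⁾ = k 0`, `f₀⁽²ⁿ⁻¹⁾ = k n` and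
`f₀⁽²ᶜ⁻¹⁾ = 0` otherwise. -/
def fextD (n : ℕ) (k : ℕ → ℕ) (f : ℕ × ℕ →₀ ℕ) (i : ℤ) (c : ℕ) : ℕ :=
  if i = -1 then (if c % 2 = 0 then k (c / 2) else 0)
  else if i = 0 then (if c = 1 then k 0 else if c = 2 * n - 1 then k n else 0)
  else f (i.toNat, c)

/-- Membership in the set `𝒟_{k₀,…,kₙ}`: `f` is a type-`D` coloured partition and every
path — a sequence of integers `p 0, …, p (2n-2)` with `p j ≥ -1`, `p j + j + 1` odd
(entry `j` is read in colour `j + 1`) and `|p (j+1) - p j| = 1` — has total weight at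
most `k₀ + ⋯ + kₙ`. -/
def MemD (n : ℕ) (k : ℕ → ℕ) (f : ℕ × ℕ →₀ ℕ) : Prop :=
  IsCPD n f ∧
  ∀ p : ℕ → ℤ,
    (∀ j < 2 * n - 1, -1 ≤ p j ∧ (p j + (j : ℤ) + 1) % 2 = 1) →
    (∀ j, j + 1 < 2 * n - 1 → |p (j + 1) - p j| = 1) →
    ∑ j ∈ Finset.range (2 * n - 1), fextD n k f (p j) (j + 1) ≤ ∑ c ∈ Finset.range (n + 1), k c

/-- The two-variable generating function `𝒞⁽ⁿ⁾_{(k₀,…,kₙ)}(z,q)`, a power series in the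
outer variable `z` with coefficients power series in `q`: the coefficient of `zˡ qᴺ` is
the number of partitions in `𝒞_{k₀,…,kₙ}` with `l(λ) = l` and `|λ| = N`. -/
def CGF (n : ℕ) (k : ℕ → ℕ) : PowerSeries (PowerSeries ℚ) :=
  PowerSeries.mk fun l => PowerSeries.mk fun N =>
    (Nat.card {f : ℕ × ℕ →₀ ℕ // MemC n k f ∧ len f = l ∧ wt f = N} : ℚ)

/-- The two-variable generating function `𝒟⁽ⁿ⁾_{(k₀,…,kₙ)}(z,q)`. -/
def DGF (n : ℕ) (k : ℕ → ℕ) : PowerSeries (PowerSeries ℚ) :=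
  PowerSeries.mk fun l => PowerSeries.mk fun N =>
    (Nat.card {f : ℕ × ℕ →₀ ℕ // MemD n k f ∧ len f = l ∧ wt f = N} : ℚ)

/-- The substitution `z ↦ z qᶜ` on a two-variable series. -/
def zsub (c : ℕ) (F : PowerSeries (PowerSeries ℚ)) : PowerSeries (PowerSeries ℚ) :=
  PowerSeries.mk fun l =>
    (PowerSeries.X : PowerSeries ℚ) ^ (c * l) * PowerSeries.coeff (R := PowerSeries ℚ) l F

/-- The variable `z`. -/
def Zv : PowerSeries (PowerSeries ℚ) := PowerSeries.X

/-- The variable `q`. -/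
def Qv : PowerSeries (PowerSeries ℚ) := PowerSeries.C (R := PowerSeries ℚ) PowerSeries.X

/-!
A partition in `𝒟_{a,k-a-b,b}` fails to lie in `𝒟_{a+1,k-a-b-1,b}` exactly when the path
`0⁽¹⁾ 1⁽²⁾ v⁽³⁾` is tight, i.e. `a + f₁⁽²⁾ + max(b, f₂⁽³⁾) = k`: all other paths only see the total
`k`. Such a partition has `i ≤ a` parts `2⁽¹⁾`, `j ≤ k - a` parts `2⁽³⁾` and exactly
`k - a - max(b, j)` parts `1⁽²⁾`. Deleting these parts and lowering every other part by `2` is a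
bijection onto `𝒟_{i,k-i-j,j}`, because the boundary values `f₀⁽¹⁾ = i`, `f₀⁽³⁾ = j` of the image are
exactly the deleted parts `2⁽¹⁾`, `2⁽³⁾`. It removes `E = i + j + k - a - max(b, j)` parts and lowers
the weight by `E + i + j` plus twice the remaining length, which is the factor
`(zq)^E q^{i+j}` together with `z ↦ zq²`.
-/

open PowerSeries

def genFun (S : Set (ℕ × ℕ →₀ ℕ)) : PowerSeries (PowerSeries ℚ) :=
  mk fun l => mk fun N => ({f ∈ S | len f = l ∧ wt f = N}.ncard : ℚ)

def FiniteWtLevels (S : Set (ℕ × ℕ →₀ ℕ)) : Prop := ∀ N, {f ∈ S | wt f = N}.Finite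

section GeneratingFunction

variable {S T : Set (ℕ × ℕ →₀ ℕ)}

lemma coeff_coeff_genFun (S : Set (ℕ × ℕ →₀ ℕ)) (l N : ℕ) :
    coeff N (coeff l (genFun S)) = ({f ∈ S | len f = l ∧ wt f = N}.ncard : ℚ) := by
  simp only [genFun, coeff_mk]

lemma DGF_eq_genFun (n : ℕ) (k : ℕ → ℕ) : DGF n k = genFun {f | MemD n k f} := by
  ext l N
  rw [coeff_coeff_genFun, DGF, coeff_mk, coeff_mk, ← Nat.card_coe_set_eq]
  rfl

lemma FiniteWtLevels.subset (hS : FiniteWtLevels S) (hTS : T ⊆ S) : FiniteWtLevels T :=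
  fun N => (hS N).subset fun _ hf => ⟨hTS hf.1, hf.2⟩

lemma FiniteWtLevels.finite_level (hS : FiniteWtLevels S) (l N : ℕ) :
    {f ∈ S | len f = l ∧ wt f = N}.Finite :=
  (hS N).subset fun _ hf => ⟨hf.1, hf.2.2⟩

lemma genFun_sub_of_subset (hS : FiniteWtLevels S) (hTS : T ⊆ S) :
    genFun S - genFun T = genFun (S \ T) := by
  ext l N
  have hlevel : {f ∈ S \ T | len f = l ∧ wt f = N} =
      {f ∈ S | len f = l ∧ wt f = N} \ {f ∈ T | len f = l ∧ wt f = N} := by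
    ext f
    simp only [Set.mem_ofPred_eq, Set.mem_sdiff]
    tauto
  have hsub : {f ∈ T | len f = l ∧ wt f = N} ⊆ {f ∈ S | len f = l ∧ wt f = N} :=
    fun _ hf => ⟨hTS hf.1, hf.2⟩
  rw [map_sub, map_sub, coeff_coeff_genFun, coeff_coeff_genFun, coeff_coeff_genFun, hlevel,
    ← Set.ncard_sdiff_add_ncard_of_subset hsub (hS.finite_level l N)]
  push_cast
  ring

lemma genFun_union (hS : FiniteWtLevels S) (hT : FiniteWtLevels T) (hST : Disjoint S T) :
    genFun (S ∪ T) = genFun S + genFun T := by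
  ext l N
  have hlevel : {f ∈ S ∪ T | len f = l ∧ wt f = N} =
      {f ∈ S | len f = l ∧ wt f = N} ∪ {f ∈ T | len f = l ∧ wt f = N} := by
    ext f
    simp only [Set.mem_ofPred_eq, Set.mem_union]
    tauto
  rw [map_add, map_add, coeff_coeff_genFun, coeff_coeff_genFun, coeff_coeff_genFun, hlevel,
    Set.ncard_union_eq (hST.mono (Set.sep_subset _ _) (Set.sep_subset _ _)) (hS.finite_level l N)
      (hT.finite_level l N)]
  exact Nat.cast_add _ _

lemma genFun_biUnion {ι : Type*} (s : Finset ι) (S : ι → Set (ℕ × ℕ →₀ ℕ))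
    (hS : FiniteWtLevels (⋃ i ∈ s, S i)) (hdisj : (s : Set ι).PairwiseDisjoint S) :
    genFun (⋃ i ∈ s, S i) = ∑ i ∈ s, genFun (S i) := by
  classical
  induction s using Finset.induction_on with
  | empty => ext l N; simp [coeff_coeff_genFun]
  | insert x s hx ih =>
    rw [Finset.set_biUnion_insert] at hS ⊢
    rw [Finset.coe_insert, Set.pairwiseDisjoint_insert_of_notMem (by exact_mod_cast hx)] at hdisj
    rw [Finset.sum_insert hx, genFun_union (hS.subset Set.subset_union_left)
      (hS.subset Set.subset_union_right) (Set.disjoint_iUnion₂_right.2 hdisj.2),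
      ih (hS.subset Set.subset_union_right) hdisj.1]

end GeneratingFunction

lemma coeff_coeff_zq_pow_mul_zsub (s E m l N : ℕ) (F : PowerSeries (PowerSeries ℚ)) :
    coeff N (coeff l ((Zv * Qv) ^ E * Qv ^ m * zsub s F)) =
      if E ≤ l ∧ E + m + s * (l - E) ≤ N then coeff (N - (E + m + s * (l - E))) (coeff (l - E) F)
      else 0 := by
  have hsplit : (Zv * Qv) ^ E * Qv ^ m * zsub s F =
      X ^ E * (C (X ^ (E + m) : PowerSeries ℚ) * zsub s F) := by
    rw [Zv, Qv, mul_pow, ← map_pow, ← map_pow, pow_add, map_mul]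
    ring
  rw [hsplit, coeff_X_pow_mul']
  by_cases hE : E ≤ l
  · rw [if_pos hE, coeff_C_mul, zsub, coeff_mk, ← mul_assoc, ← pow_add, coeff_X_pow_mul']
    simp only [hE, true_and]
  · rw [if_neg hE, if_neg (fun h => hE h.1), map_zero]

lemma genFun_image {φ : (ℕ × ℕ →₀ ℕ) → (ℕ × ℕ →₀ ℕ)} (hφ : Function.Injective φ) {s E m : ℕ}
    (hlen : ∀ g, len (φ g) = len g + E) (hwt : ∀ g, wt (φ g) = wt g + s * len g + E + m)
    (S : Set (ℕ × ℕ →₀ ℕ)) :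
    genFun (φ '' S) = (Zv * Qv) ^ E * Qv ^ m * zsub s (genFun S) := by
  ext l N
  rw [coeff_coeff_zq_pow_mul_zsub, coeff_coeff_genFun]
  split_ifs with hlN
  · have hlevel : {f ∈ φ '' S | len f = l ∧ wt f = N} =
        φ '' {g ∈ S | len g = l - E ∧ wt g = N - (E + m + s * (l - E))} := by
      ext f
      constructor
      · rintro ⟨⟨g, hg, rfl⟩, hl, hN⟩
        rw [hlen] at hl
        rw [hwt, show len g = l - E by omega] at hN
        exact ⟨g, ⟨hg, by omega, by omega⟩, rfl⟩
      · rintro ⟨g, ⟨hg, hl, hN⟩, rfl⟩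
        refine ⟨⟨g, hg, rfl⟩, by rw [hlen]; omega, ?_⟩
        rw [hwt, hl]
        omega
    rw [coeff_coeff_genFun, hlevel, Set.ncard_image_of_injective _ hφ]
  · have hlevel : {f ∈ φ '' S | len f = l ∧ wt f = N} = ∅ := by
      refine Set.eq_empty_of_forall_notMem ?_
      rintro _ ⟨⟨g, -, rfl⟩, hl, hN⟩
      rw [hlen] at hl
      rw [hwt, show len g = l - E by omega] at hN
      omega
    rw [hlevel, Set.ncard_empty, Nat.cast_zero]

lemma fst_mul_apply_le_wt (f : ℕ × ℕ →₀ ℕ) (p : ℕ × ℕ) : p.1 * f p ≤ wt f := by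
  by_cases hp : p ∈ f.support
  · exact Finset.single_le_sum (f := fun q => q.1 * f q) (fun _ _ => Nat.zero_le _) hp
  · simp [Finsupp.notMem_support_iff.1 hp]

lemma finiteWtLevels_setOf_isCPD (n : ℕ) : FiniteWtLevels {f | IsCPD n f} := by
  classical
  intro N
  refine (Set.finite_Iic
    (Finsupp.indicator (Finset.range (N + 1) ×ˢ Finset.range (2 * n)) fun _ _ => N)).subset ?_
  rintro f ⟨hf, rfl⟩ p
  by_cases hp : p ∈ f.support
  · obtain ⟨hp1, hp2, hp2', -⟩ := hf p hp
    have hfp : 1 ≤ f p := Nat.one_le_iff_ne_zero.2 (Finsupp.mem_support_iff.1 hp)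
    have hle := fst_mul_apply_le_wt f p
    rw [Finsupp.indicator_apply, dif_pos (Finset.mem_product.2
      ⟨Finset.mem_range.2 (by nlinarith), Finset.mem_range.2 (by omega)⟩)]
    nlinarith
  · simp [Finsupp.notMem_support_iff.1 hp]

def kTriple (x y z : ℕ) : ℕ → ℕ :=
  fun t => if t = 0 then x else if t = 1 then y else if t = 2 then z else 0

@[simp] lemma kTriple_zero (x y z : ℕ) : kTriple x y z 0 = x := rfl
@[simp] lemma kTriple_one (x y z : ℕ) : kTriple x y z 1 = y := rfl
@[simp] lemma kTriple_two (x y z : ℕ) : kTriple x y z 2 = z := rfl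

def extFreq (x : ℕ) (f : ℕ × ℕ →₀ ℕ) (c u : ℕ) : ℕ := if u = 0 then x else f (u, c)

def maxPathWeight (x z : ℕ) (f : ℕ × ℕ →₀ ℕ) (m : ℕ) : ℕ :=
  max (extFreq x f 1 (m - 1)) (extFreq x f 1 (m + 1)) + f (m, 2) +
    max (extFreq z f 3 (m - 1)) (extFreq z f 3 (m + 1))

section PathCondition

variable (k : ℕ → ℕ) (f : ℕ × ℕ →₀ ℕ)

lemma fextD_two_natCast_one (u : ℕ) : fextD 2 k f u 1 = extFreq (k 0) f 1 u := by
  rcases u with _ | u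
  · rfl
  · rw [fextD, if_neg (by omega), if_neg (by omega), extFreq, if_neg (by omega), Int.toNat_natCast]

lemma fextD_two_natCast_three (u : ℕ) : fextD 2 k f u 3 = extFreq (k 2) f 3 u := by
  rcases u with _ | u
  · rfl
  · rw [fextD, if_neg (by omega), if_neg (by omega), extFreq, if_neg (by omega), Int.toNat_natCast]

lemma fextD_two_natCast_two {m : ℕ} (hm : m ≠ 0) : fextD 2 k f m 2 = f (m, 2) := by
  simp [fextD, hm]

lemma memD_two_iff_forall_path : MemD 2 k f ↔ IsCPD 2 f ∧ ∀ m u v : ℕ, m % 2 = 1 →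
    (u = m - 1 ∨ u = m + 1) → (v = m - 1 ∨ v = m + 1) →
      extFreq (k 0) f 1 u + f (m, 2) + extFreq (k 2) f 3 v ≤ k 0 + k 1 + k 2 := by
  simp only [MemD, show 2 * 2 - 1 = 3 from rfl, Finset.sum_range_succ, Finset.sum_range_zero,
    zero_add]
  refine and_congr_right fun _ => ⟨fun hpath m u v hm hu hv => ?_, fun hbound p hp hstep => ?_⟩
  · have := hpath (fun t => if t = 0 then (u : ℤ) else if t = 1 then (m : ℤ) else v)
      (by intro j hj; interval_cases j <;> simp <;> omega)
      (by
        intro j hj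
        obtain rfl | rfl : j = 0 ∨ j = 1 := (by omega) <;> simp [abs_eq zero_le_one] <;> omega)
    simpa [fextD_two_natCast_one, fextD_two_natCast_three,
      fextD_two_natCast_two k f (show m ≠ 0 by omega)] using this
  · obtain ⟨hp0, hpar0⟩ := hp 0 (by norm_num)
    obtain ⟨hp1, hpar1⟩ := hp 1 (by norm_num)
    obtain ⟨hp2, hpar2⟩ := hp 2 (by norm_num)
    have hs0 := hstep 0 (by norm_num)
    have hs1 := hstep 1 (by norm_num)
    simp only [abs_eq zero_le_one] at hs0 hs1
    norm_num at hs0 hs1 hpar0 hpar1 hpar2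
    by_cases hm1 : p 1 = -1
    · rw [hm1, show p 0 = 0 by omega, show p 2 = 0 by omega]
      exact le_rfl
    · obtain ⟨u, hu⟩ := Int.eq_ofNat_of_zero_le (show 0 ≤ p 0 by omega)
      obtain ⟨m, hm⟩ := Int.eq_ofNat_of_zero_le (show 0 ≤ p 1 by omega)
      obtain ⟨v, hv⟩ := Int.eq_ofNat_of_zero_le (show 0 ≤ p 2 by omega)
      rw [hu, hm, hv, fextD_two_natCast_one, fextD_two_natCast_two k f (by omega),
        fextD_two_natCast_three]
      exact hbound m u v (by omega) (by omega) (by omega)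

lemma memD_two_iff :
    MemD 2 k f ↔ IsCPD 2 f ∧ ∀ m, m % 2 = 1 → maxPathWeight (k 0) (k 2) f m ≤ k 0 + k 1 + k 2 := by
  rw [memD_two_iff_forall_path]
  refine and_congr_right fun _ => ⟨fun hpath m hm => ?_, fun hmax m u v hm hu hv => ?_⟩
  · have := hpath m (m - 1) (m - 1) hm (.inl rfl) (.inl rfl)
    have := hpath m (m - 1) (m + 1) hm (.inl rfl) (.inr rfl)
    have := hpath m (m + 1) (m - 1) hm (.inr rfl) (.inl rfl)
    have := hpath m (m + 1) (m + 1) hm (.inr rfl) (.inr rfl)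
    unfold maxPathWeight
    omega
  · have := hmax m hm
    unfold maxPathWeight at this
    rcases hu with rfl | rfl <;> rcases hv with rfl | rfl <;> omega

end PathCondition

section Raise

lemma len_add (f g : ℕ × ℕ →₀ ℕ) : len (f + g) = len f + len g :=
  Finsupp.sum_add_index' (fun _ => rfl) (fun _ _ _ => rfl)

lemma wt_add (f g : ℕ × ℕ →₀ ℕ) : wt (f + g) = wt f + wt g :=
  Finsupp.sum_add_index' (fun _ => mul_zero _) (fun _ _ _ => mul_add _ _ _)

lemma len_single (p : ℕ × ℕ) (v : ℕ) : len (Finsupp.single p v) = v :=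
  Finsupp.sum_single_index rfl

lemma wt_single (p : ℕ × ℕ) (v : ℕ) : wt (Finsupp.single p v) = p.1 * v :=
  Finsupp.sum_single_index (mul_zero _)

def shiftEmb (s : ℕ) : ℕ × ℕ ↪ ℕ × ℕ :=
  ⟨fun p => (p.1 + s, p.2), fun p q h => by
    simp only [Prod.mk.injEq, Nat.add_right_cancel_iff] at h
    exact Prod.ext h.1 h.2⟩

@[simp] lemma shiftEmb_apply (s : ℕ) (p : ℕ × ℕ) : shiftEmb s p = (p.1 + s, p.2) := rfl

lemma embDomain_shiftEmb_apply (s : ℕ) (g : ℕ × ℕ →₀ ℕ) (m d : ℕ) :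
    g.embDomain (shiftEmb s) (m, d) = if s ≤ m then g (m - s, d) else 0 := by
  split_ifs with hm
  · obtain ⟨t, rfl⟩ := Nat.exists_eq_add_of_le' hm
    rw [Nat.add_sub_cancel]
    exact Finsupp.embDomain_apply_self (shiftEmb s) g (t, d)
  · refine Finsupp.embDomain_of_notMem_range _ _ _ ?_
    rintro ⟨p, hp⟩
    have : p.1 + s = m := congrArg Prod.fst hp
    omega

lemma len_embDomain_shiftEmb (s : ℕ) (g : ℕ × ℕ →₀ ℕ) :
    len (g.embDomain (shiftEmb s)) = len g := by
  rw [len, Finsupp.sum_embDomain]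
  rfl

lemma wt_embDomain_shiftEmb (s : ℕ) (g : ℕ × ℕ →₀ ℕ) :
    wt (g.embDomain (shiftEmb s)) = wt g + s * len g := by
  rw [wt, Finsupp.sum_embDomain, wt, len, Finsupp.mul_sum, ← Finsupp.sum_add]
  exact Finsupp.sum_congr fun p _ => add_mul p.1 s (g p)

def raise (i c j : ℕ) (g : ℕ × ℕ →₀ ℕ) : ℕ × ℕ →₀ ℕ :=
  g.embDomain (shiftEmb 2) + Finsupp.single (2, 1) i + Finsupp.single (1, 2) c +
    Finsupp.single (2, 3) j

def lower (f : ℕ × ℕ →₀ ℕ) : ℕ × ℕ →₀ ℕ :=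
  ((f.comapDomain (shiftEmb 2) (shiftEmb 2).injective.injOn).erase (0, 1)).erase (0, 3)

variable {i c j : ℕ} {g f : ℕ × ℕ →₀ ℕ}

lemma len_raise : len (raise i c j g) = len g + (i + c + j) := by
  simp only [raise, len_add, len_single, len_embDomain_shiftEmb]
  ring

lemma wt_raise : wt (raise i c j g) = wt g + 2 * len g + (2 * i + c + 2 * j) := by
  simp only [raise, wt_add, wt_single, wt_embDomain_shiftEmb]
  ring

lemma raise_injective (i c j : ℕ) : Function.Injective (raise i c j) := fun _ _ h =>
  Finsupp.embDomain_injective _ (add_right_cancel (add_right_cancel (add_right_cancel h)))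

lemma raise_apply (m d : ℕ) :
    raise i c j g (m, d) = (if 2 ≤ m then g (m - 2, d) else 0) + (if m = 2 ∧ d = 1 then i else 0)
      + (if m = 1 ∧ d = 2 then c else 0) + (if m = 2 ∧ d = 3 then j else 0) := by
  simp only [raise, Finsupp.add_apply, embDomain_shiftEmb_apply, Finsupp.single_apply,
    Prod.mk.injEq, eq_comm]

lemma lower_apply (m d : ℕ) :
    lower f (m, d) = if m = 0 ∧ (d = 1 ∨ d = 3) then 0 else f (m + 2, d) := by
  simp only [lower, Finsupp.erase_apply, Finsupp.comapDomain_apply, shiftEmb_apply]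
  split_ifs <;> simp_all [Prod.ext_iff]

end Raise

section RaiseLower

variable {i c j : ℕ} {g f : ℕ × ℕ →₀ ℕ}

lemma IsCPD.apply_zero {n : ℕ} (hf : IsCPD n f) (d : ℕ) : f (0, d) = 0 :=
  Finsupp.notMem_support_iff.1 fun hp => absurd (hf _ hp).1 (by norm_num)

lemma IsCPD.apply_one (hf : IsCPD 2 f) {d : ℕ} (hd : d ≠ 2) : f (1, d) = 0 :=
  Finsupp.notMem_support_iff.1 fun hp => by
    obtain ⟨-, h1, h3, hodd⟩ := hf _ hp
    simp only at h1 h3 hodd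
    omega

lemma raise_apply_two_one (hg : g (0, 1) = 0) : raise i c j g (2, 1) = i := by
  simp [raise_apply, hg]

lemma raise_apply_two_three (hg : g (0, 3) = 0) : raise i c j g (2, 3) = j := by
  simp [raise_apply, hg]

lemma raise_apply_one_two : raise i c j g (1, 2) = c := by
  simp [raise_apply]

lemma raise_lower (hf : IsCPD 2 f) : raise (f (2, 1)) (f (1, 2)) (f (2, 3)) (lower f) = f := by
  ext ⟨m, d⟩ : 1
  rw [raise_apply]
  rcases m with _ | _ | m
  · simp [hf.apply_zero]
  · by_cases hd : d = 2
    · simp [hd]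
    · simp [hd, hf.apply_one hd]
  · rw [if_pos (by omega), lower_apply]
    rcases m with _ | m
    · obtain rfl | rfl | hd : d = 1 ∨ d = 3 ∨ (d ≠ 1 ∧ d ≠ 3) := by omega
      all_goals simp_all
    · simp

lemma isCPD_raise (hg : IsCPD 2 g) : IsCPD 2 (raise i c j g) := by
  rintro ⟨m, d⟩ hp
  have hne := Finsupp.mem_support_iff.1 hp
  rw [raise_apply] at hne
  by_cases hgm : 2 ≤ m ∧ g (m - 2, d) ≠ 0
  · obtain ⟨h1, h2, h3, h4⟩ := hg _ (Finsupp.mem_support_iff.2 hgm.2)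
    simp only at h1 h2 h3 h4 ⊢
    omega
  · simp only
    split_ifs at hne <;> simp_all

lemma isCPD_lower (hf : IsCPD 2 f) : IsCPD 2 (lower f) := by
  rintro ⟨m, d⟩ hp
  have hne := Finsupp.mem_support_iff.1 hp
  rw [lower_apply] at hne
  split_ifs at hne with hmd
  · exact absurd rfl hne
  · obtain ⟨h1, h2, h3, h4⟩ := hf _ (Finsupp.mem_support_iff.2 hne)
    simp only at h1 h2 h3 h4 ⊢
    omega

end RaiseLower

section PathWeights

variable {i c j x y z y' : ℕ} {g f : ℕ × ℕ →₀ ℕ}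

lemma extFreq_raise_one (hg : g (0, 1) = 0) (u : ℕ) :
    extFreq x (raise i c j g) 1 (u + 2) = extFreq i g 1 u := by
  rcases u with _ | u <;> simp [extFreq, raise_apply, hg]

lemma extFreq_raise_three (hg : g (0, 3) = 0) (u : ℕ) :
    extFreq z (raise i c j g) 3 (u + 2) = extFreq j g 3 u := by
  rcases u with _ | u <;> simp [extFreq, raise_apply, hg]

lemma maxPathWeight_raise (hg : IsCPD 2 g) {m : ℕ} (hm : m % 2 = 1) :
    maxPathWeight x z (raise i c j g) (m + 2) = maxPathWeight i j g m := by
  obtain ⟨t, rfl⟩ : ∃ t, m = t + 1 := ⟨m - 1, by omega⟩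
  simp only [maxPathWeight, show t + 1 + 2 - 1 = t + 2 by omega,
    show t + 1 + 2 + 1 = t + 1 + 1 + 2 by omega, Nat.add_sub_cancel,
    extFreq_raise_one (hg.apply_zero 1), extFreq_raise_three (hg.apply_zero 3)]
  simp [raise_apply]

lemma maxPathWeight_raise_one (hg : IsCPD 2 g) :
    maxPathWeight x z (raise i c j g) 1 = max x i + c + max z j := by
  simp [maxPathWeight, extFreq, raise_apply, hg.apply_zero]

lemma memD_raise (hg : MemD 2 (kTriple i y' j) g) (hK : i + y' + j ≤ x + y + z)
    (hbd : max x i + c + max z j ≤ x + y + z) : MemD 2 (kTriple x y z) (raise i c j g) := by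
  rw [memD_two_iff] at hg ⊢
  simp only [kTriple_zero, kTriple_one, kTriple_two] at hg ⊢
  refine ⟨isCPD_raise hg.1, fun m hm => ?_⟩
  obtain rfl | ⟨t, rfl⟩ : m = 1 ∨ ∃ t, m = t + 2 := by
    rcases m with _ | _ | t <;> simp_all
  · rwa [maxPathWeight_raise_one hg.1]
  · rw [maxPathWeight_raise hg.1 (by omega)]
    exact (hg.2 t (by omega)).trans hK

lemma MemD.lower (hf : MemD 2 (kTriple x y z) f) (hK : x + y + z ≤ f (2, 1) + y' + f (2, 3)) :
    MemD 2 (kTriple (f (2, 1)) y' (f (2, 3))) (lower f) := by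
  rw [memD_two_iff] at hf ⊢
  simp only [kTriple_zero, kTriple_one, kTriple_two] at hf ⊢
  have hlower := isCPD_lower hf.1
  refine ⟨hlower, fun m hm => ?_⟩
  rw [← maxPathWeight_raise hlower hm (x := x) (z := z) (c := f (1, 2)), raise_lower hf.1]
  exact (hf.2 (m + 2) (by omega)).trans hK

end PathWeights

section Decomposition

variable {i c j x y z x' y' z' : ℕ} {g f : ℕ × ℕ →₀ ℕ}

lemma maxPathWeight_one :
    maxPathWeight x z f 1 = max x (f (2, 1)) + f (1, 2) + max z (f (2, 3)) := by
  simp [maxPathWeight, extFreq]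

lemma MemD.maxPathWeight_one_le (hf : MemD 2 (kTriple x y z) f) :
    max x (f (2, 1)) + f (1, 2) + max z (f (2, 3)) ≤ x + y + z := by
  simpa [maxPathWeight_one] using ((memD_two_iff _ f).1 hf).2 1 rfl

lemma MemD.of_maxPathWeight_one_le (hf : MemD 2 (kTriple x y z) f) (hK : x + y + z ≤ x' + y' + z')
    (h1 : max x' (f (2, 1)) + f (1, 2) + max z' (f (2, 3)) ≤ x' + y' + z') :
    MemD 2 (kTriple x' y' z') f := by
  rw [memD_two_iff] at hf ⊢
  simp only [kTriple_zero, kTriple_one, kTriple_two] at hf ⊢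
  refine ⟨hf.1, fun m hm => ?_⟩
  obtain rfl | ⟨t, rfl⟩ : m = 1 ∨ ∃ t, m = t + 2 := by
    rcases m with _ | _ | t <;> simp_all
  · rwa [maxPathWeight_one]
  · have hlower := isCPD_lower hf.1
    have := hf.2 (t + 2) hm
    rw [← raise_lower hf.1, maxPathWeight_raise hlower (by omega)] at this ⊢
    omega

lemma disjoint_image_raise {n : ℕ} {S S' : Set (ℕ × ℕ →₀ ℕ)} {c' : ℕ} (p q : ℕ × ℕ)
    (hS : ∀ g ∈ S, IsCPD n g) (hS' : ∀ g ∈ S', IsCPD n g) (hpq : p ≠ q) :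
    Disjoint (raise p.1 c p.2 '' S) (raise q.1 c' q.2 '' S') := by
  refine Set.disjoint_left.2 ?_
  rintro _ ⟨g, hg, rfl⟩ ⟨g', hg', heq⟩
  refine hpq (Prod.ext ?_ ?_)
  · have := congrArg (· (2, 1)) heq
    simp only [raise_apply_two_one ((hS g hg).apply_zero 1),
      raise_apply_two_one ((hS' g' hg').apply_zero 1)] at this
    exact this.symm
  · have := congrArg (· (2, 3)) heq
    simp only [raise_apply_two_three ((hS g hg).apply_zero 3),
      raise_apply_two_three ((hS' g' hg').apply_zero 3)] at this
    exact this.symm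

lemma sdiff_eq_biUnion_image_raise {a b k : ℕ} (h : a + b + 1 ≤ k) :
    {f | MemD 2 (kTriple a (k - a - b) b) f} \ {f | MemD 2 (kTriple (a + 1) (k - a - b - 1) b) f} =
      ⋃ p ∈ Finset.range (a + 1) ×ˢ Finset.range (k - a + 1),
        raise p.1 (k - a - max b p.2) p.2 '' {g | MemD 2 (kTriple p.1 (k - p.1 - p.2) p.2) g} := by
  ext f
  simp only [Set.mem_sdiff, Set.mem_ofPred_eq, Set.mem_iUnion, Set.mem_image, Finset.mem_product,
    Finset.mem_range, exists_prop, Prod.exists]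
  constructor
  · rintro ⟨hA, hB⟩
    have hbd := hA.maxPathWeight_one_le
    have hnot : ¬ max (a + 1) (f (2, 1)) + f (1, 2) + max b (f (2, 3)) ≤
        a + 1 + (k - a - b - 1) + b := fun h' => hB (hA.of_maxPathWeight_one_le (by omega) h')
    refine ⟨f (2, 1), f (2, 3), ⟨by omega, by omega⟩, lower f, hA.lower (by omega), ?_⟩
    rw [show k - a - max b (f (2, 3)) = f (1, 2) by omega]
    exact raise_lower hA.1
  · rintro ⟨i, j, ⟨hi, hj⟩, g, hg, rfl⟩
    refine ⟨memD_raise hg (by omega) (by omega), fun hB => ?_⟩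
    have := hB.maxPathWeight_one_le
    rw [raise_apply_two_one (hg.1.apply_zero 1), raise_apply_one_two,
      raise_apply_two_three (hg.1.apply_zero 3)] at this
    omega

end Decomposition

-- The paper's exponent `k + i - a + min(0, j - b)` appears as `k + i - a - (b - j)` in `ℕ`.
/-- Proposition 4.4: for nonnegative integers `a, b, k` with `a + b ≤ k − 1`,
`𝒟⁽²⁾_{(a,k−a−b,b)}(z,q) − 𝒟⁽²⁾_{(a+1,k−a−b−1,b)}(z,q)
  = Σ_{i=0}^{a} Σ_{j=0}^{k−a} (zq)^{k+i−a+min(0,j−b)} q^{i+j} 𝒟⁽²⁾_{(i,k−i−j,j)}(zq²,q)`.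
The exponent `k+i−a+min(0,j−b)` is written as the natural number `k + i − a − (b − j)`
(truncated subtraction), which agrees with it in the given range. -/
theorem primc_D3_functional_equation (a b k : ℕ) (h : a + b + 1 ≤ k) :
    DGF 2 (fun t => if t = 0 then a else if t = 1 then k - a - b else if t = 2 then b else 0)
      - DGF 2 (fun t => if t = 0 then a + 1 else if t = 1 then k - a - b - 1
          else if t = 2 then b else 0) =
    ∑ i ∈ Finset.range (a + 1), ∑ j ∈ Finset.range (k - a + 1),
      (Zv * Qv) ^ (k + i - a - (b - j)) * Qv ^ (i + j) *
        zsub 2 (DGF 2 (fun t => if t = 0 then i else if t = 1 then k - i - j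
          else if t = 2 then j else 0)) := by
  change DGF 2 (kTriple a (k - a - b) b) - DGF 2 (kTriple (a + 1) (k - a - b - 1) b) =
    ∑ i ∈ Finset.range (a + 1), ∑ j ∈ Finset.range (k - a + 1),
      (Zv * Qv) ^ (k + i - a - (b - j)) * Qv ^ (i + j) * zsub 2 (DGF 2 (kTriple i (k - i - j) j))
  have hfin : FiniteWtLevels {f | MemD 2 (kTriple a (k - a - b) b) f} :=
    (finiteWtLevels_setOf_isCPD 2).subset fun _ hf => hf.1
  have hsub : {f | MemD 2 (kTriple (a + 1) (k - a - b - 1) b) f} ⊆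
      {f | MemD 2 (kTriple a (k - a - b) b) f} := fun f hf =>
    hf.of_maxPathWeight_one_le (by omega) (by have := hf.maxPathWeight_one_le; omega)
  have hdecomp := sdiff_eq_biUnion_image_raise h
  rw [DGF_eq_genFun, DGF_eq_genFun, genFun_sub_of_subset hfin hsub, hdecomp,
    genFun_biUnion _ _ (hdecomp ▸ hfin.subset Set.sdiff_subset)
      fun p _ q _ hpq => disjoint_image_raise p q (fun _ hg => hg.1) (fun _ hg => hg.1) hpq,
    Finset.sum_product]
  refine Finset.sum_congr rfl fun i _ => Finset.sum_congr rfl fun j hj => ?_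
  rw [genFun_image (raise_injective _ _ _) (s := 2) (m := i + j) (fun _ => len_raise)
    (fun _ => by rw [wt_raise]; ring), DGF_eq_genFun,
    show k + i - a - (b - j) = i + (k - a - max b j) + j by have := Finset.mem_range.1 hj; omega]
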